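/- arXiv:2301.00660 — 4 statements merged into one kernel-verified Lean document; each statement's English description precedes it below -/
import Mathlib

section
/- Let (X, c) be a Čech closure space, (Y, d) a topological closure space, and f : X → Y a set map. Then f : (X, c) → (Y, d) is continuous if and only if f : (X, τ(c)) → (Y, d) is continuous, where τ(c) is the topological modification of c. -/
/-! Continuity for `c` pulls `d`-closed sets back to `c`-closed sets. Since `d` is idempotent,
`d (f '' A)` is `d`-closed, so `f ⁻¹' d (f '' A)` is a `c`-closed superset of `A` and therefore
contains `τ(c) A`. Conversely `c A ⊆ τ(c) A` by monotonicity of `c`, so continuity for `τ(c)`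
implies continuity for `c`. -/

open Set

namespace CechClosure

variable {X Y : Type*}

def topologicalModification (c : Set X → Set X) (A : Set X) : Set X :=
  ⋂₀ {F : Set X | c F = F ∧ A ⊆ F}

theorem monotone_of_map_union {c : Set X → Set Y} (hc : ∀ A B, c (A ∪ B) = c A ∪ c B) :
    Monotone c := fun A B hAB => by
  rw [← union_eq_self_of_subset_left hAB, hc]
  exact subset_union_left

theorem subset_topologicalModification {c : Set X → Set X} (hc : Monotone c) (A : Set X) :
    c A ⊆ topologicalModification c A :=
  subset_sInter fun _ ⟨hF, hAF⟩ => hF ▸ hc hAF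

theorem topologicalModification_subset {c : Set X → Set X} {A F : Set X} (hF : c F = F)
    (hAF : A ⊆ F) : topologicalModification c A ⊆ F :=
  sInter_subset_of_mem ⟨hF, hAF⟩

theorem closure_preimage_eq_of_continuous {c : Set X → Set X} {d : Set Y → Set Y} {f : X → Y}
    (hc : ∀ A, A ⊆ c A) (hd : Monotone d) (hf : ∀ A, f '' c A ⊆ d (f '' A)) {G : Set Y}
    (hG : d G = G) : c (f ⁻¹' G) = f ⁻¹' G := by
  refine Subset.antisymm ?_ (hc _)
  rw [← image_subset_iff]
  calc f '' c (f ⁻¹' G) ⊆ d (f '' (f ⁻¹' G)) := hf _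
    _ ⊆ d G := hd (image_preimage_subset f G)
    _ = G := hG

end CechClosure

open CechClosure in
theorem continuous_iff_topological_modification_general {X Y : Type*}
    (c : Set X → Set X)
    (hc2 : ∀ A : Set X, A ⊆ c A)
    (hc3 : ∀ A B : Set X, c (A ∪ B) = c A ∪ c B)
    (d : Set Y → Set Y)
    (hd2 : ∀ B : Set Y, B ⊆ d B)
    (hd3 : ∀ A B : Set Y, d (A ∪ B) = d A ∪ d B)
    (hd4 : ∀ B : Set Y, d (d B) = d B)
    (t : Set X → Set X)
    (ht : ∀ A : Set X, t A = ⋂₀ {F : Set X | c F = F ∧ A ⊆ F})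
    (f : X → Y) :
    (∀ A : Set X, f '' c A ⊆ d (f '' A)) ↔ (∀ A : Set X, f '' t A ⊆ d (f '' A)) := by
  obtain rfl : t = topologicalModification c := funext ht
  constructor
  · intro hf A
    have hclosed :=
      closure_preimage_eq_of_continuous hc2 (monotone_of_map_union hd3) hf (hd4 (f '' A))
    exact image_subset_iff.mpr
      (topologicalModification_subset hclosed (image_subset_iff.mp (hd2 _)))
  · intro hf A
    exact (image_mono (subset_topologicalModification (monotone_of_map_union hc3) A)).trans (hf A)

theorem continuous_iff_topological_modification {X Y : Type*}
    (c : Set X → Set X)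
    (hc1 : c ∅ = ∅) (hc2 : ∀ A : Set X, A ⊆ c A)
    (hc3 : ∀ A B : Set X, c (A ∪ B) = c A ∪ c B)
    (d : Set Y → Set Y)
    (hd1 : d ∅ = ∅) (hd2 : ∀ B : Set Y, B ⊆ d B)
    (hd3 : ∀ A B : Set Y, d (A ∪ B) = d A ∪ d B)
    (hd4 : ∀ B : Set Y, d (d B) = d B)
    (t : Set X → Set X)
    (ht : ∀ A : Set X, t A = ⋂₀ {F : Set X | c F = F ∧ A ⊆ F})
    (f : X → Y) :
    (∀ A : Set X, f '' c A ⊆ d (f '' A)) ↔ (∀ A : Set X, f '' t A ⊆ d (f '' A)) :=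
  continuous_iff_topological_modification_general c hc2 hc3 d hd2 hd3 hd4 t ht f
end

section
/- Let (X, c) be a compact topological space, (Y, d) a closure space with an interior cover 𝒱 (every point of Y has a member of 𝒱 as a neighborhood), and f : (X, c) → (Y, d) continuous. Then there exists a finite open cover 𝒰 of X such that for every U ∈ 𝒰 there exists V ∈ 𝒱 with f(U) ⊆ V. -/
/-! Each point `x` has some `W ∈ V` with `f x ∉ d Wᶜ`; continuity applied to `f ⁻¹' Wᶜ` shows
`x ∉ closure (f ⁻¹' Wᶜ)`, i.e. `f ⁻¹' W` is a neighbourhood of `x`. Compactness of `X` then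
extracts finitely many of the interiors of these neighbourhoods. -/

open Set Topology

theorem monotone_of_map_union {Y : Type*} {d : Set Y → Set Y}
    (hd : ∀ A B : Set Y, d (A ∪ B) = d A ∪ d B) : Monotone d := by
  intro A B hAB
  rw [← union_eq_self_of_subset_left hAB, hd]
  exact subset_union_left

theorem preimage_mem_nhds_of_notMem_map_compl {X Y : Type*} [TopologicalSpace X]
    {d : Set Y → Set Y} (hd : Monotone d) {f : X → Y}
    (hf : ∀ A : Set X, f '' closure A ⊆ d (f '' A)) {W : Set Y} {x : X} (hx : f x ∉ d Wᶜ) :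
    f ⁻¹' W ∈ 𝓝 x := by
  rw [← mem_interior_iff_mem_nhds, ← compl_compl (f ⁻¹' W), ← preimage_compl, interior_compl]
  intro hcl
  exact hx (hd (image_preimage_subset f _) (hf _ (mem_image_of_mem f hcl)))

theorem CompactSpace.exists_finite_open_refinement {X : Type*} [TopologicalSpace X]
    [CompactSpace X] (S : Set (Set X)) (hS : ∀ x, ∃ s ∈ S, s ∈ 𝓝 x) :
    ∃ U : Finset (Set X), (∀ O ∈ U, IsOpen O) ∧ ⋃₀ (U : Set (Set X)) = univ ∧
      ∀ O ∈ U, ∃ s ∈ S, O ⊆ s := by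
  classical
  choose s hsS hs using hS
  obtain ⟨t, ht⟩ := isCompact_univ.elim_finite_subcover (fun x => interior (s x))
    (fun x => isOpen_interior) (fun x _ => mem_iUnion.2 ⟨x, mem_interior_iff_mem_nhds.2 (hs x)⟩)
  refine ⟨t.image fun x => interior (s x), ?_, ?_, ?_⟩
  · simp only [Finset.mem_image]
    rintro _ ⟨x, -, rfl⟩
    exact isOpen_interior
  · rw [Finset.coe_image, sUnion_image, eq_univ_iff_forall]
    exact fun y => ht (mem_univ y)
  · simp only [Finset.mem_image]
    rintro _ ⟨x, -, rfl⟩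
    exact ⟨s x, hsS x, interior_subset⟩

theorem compact_refinement_of_interior_cover_general {X Y : Type*}
    [TopologicalSpace X] [CompactSpace X]
    (d : Set Y → Set Y)
    (hd3 : ∀ A B : Set Y, d (A ∪ B) = d A ∪ d B)
    (V : Set (Set Y)) (hV : ∀ y : Y, ∃ W ∈ V, y ∉ d Wᶜ)
    (f : X → Y)
    (hf : ∀ A : Set X, f '' closure A ⊆ d (f '' A)) :
    ∃ U : Finset (Set X), (∀ O ∈ U, IsOpen O) ∧ ⋃₀ (U : Set (Set X)) = Set.univ ∧
      ∀ O ∈ U, ∃ W ∈ V, f '' O ⊆ W := by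
  have hnhds : ∀ x, ∃ s ∈ preimage f '' V, s ∈ 𝓝 x := fun x => by
    obtain ⟨W, hWV, hW⟩ := hV (f x)
    exact ⟨f ⁻¹' W, mem_image_of_mem _ hWV,
      preimage_mem_nhds_of_notMem_map_compl (monotone_of_map_union hd3) hf hW⟩
  obtain ⟨U, hUopen, hUcover, hUsub⟩ := CompactSpace.exists_finite_open_refinement _ hnhds
  refine ⟨U, hUopen, hUcover, fun O hO => ?_⟩
  obtain ⟨_, ⟨W, hWV, rfl⟩, hOW⟩ := hUsub O hO
  exact ⟨W, hWV, image_subset_iff.2 hOW⟩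

theorem compact_refinement_of_interior_cover {X Y : Type*}
    [TopologicalSpace X] [CompactSpace X]
    (d : Set Y → Set Y)
    (hd1 : d ∅ = ∅) (hd2 : ∀ B : Set Y, B ⊆ d B)
    (hd3 : ∀ A B : Set Y, d (A ∪ B) = d A ∪ d B)
    (V : Set (Set Y)) (hV : ∀ y : Y, ∃ W ∈ V, y ∉ d Wᶜ)
    (f : X → Y)
    (hf : ∀ A : Set X, f '' closure A ⊆ d (f '' A)) :
    ∃ U : Finset (Set X), (∀ O ∈ U, IsOpen O) ∧ ⋃₀ (U : Set (Set X)) = Set.univ ∧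
      ∀ O ∈ U, ∃ W ∈ V, f '' O ⊆ W :=
  compact_refinement_of_interior_cover_general d hd3 V hV f hf
end

section
/- Pasting lemma for closure spaces: let (X, c) be a closure space with a locally finite closed cover {U_α}, and let f : (X, c) → (Y, d) be a set map such that each restriction f|_{U_α} (with the subspace closure) is continuous. Then f is continuous. -/
/-!
A point `x ∈ c A` has a neighbourhood `B` meeting only finitely many `U i`. Then `x ∈ c (A ∩ B)`,
and `A ∩ B` is covered by the finitely many sets `U i ∩ A` with `U i` meeting `B`; since `c`
commutes with finite unions, `x ∈ c (U i ∩ A)` for one of them. As `U i` is closed, `x ∈ U i`,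
so continuity of `f` on `U i` gives `f x ∈ d (f '' (U i ∩ A)) ⊆ d (f '' A)`.
-/

open Set

section

variable {α β ι : Type*}

theorem mem_map_inter_of_notMem_map_compl {c : Set α → Set α}
    (hc : ∀ A B, c (A ∪ B) = c A ∪ c B) {A B : Set α} {x : α}
    (hxA : x ∈ c A) (hxB : x ∉ c Bᶜ) : x ∈ c (A ∩ B) := by
  have hA : A ⊆ (A ∩ B) ∪ Bᶜ := fun a ha => (em (a ∈ B)).imp (⟨ha, ·⟩) id
  have hx : x ∈ c (A ∩ B) ∪ c Bᶜ := hc _ _ ▸ Monotone.of_map_sup hc hA hxA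
  exact hx.resolve_right hxB

theorem Set.Finite.map_biUnion_of_map_union {c : Set α → Set β} (hc₀ : c ∅ = ∅)
    (hc : ∀ A B, c (A ∪ B) = c A ∪ c B) {F : Set ι} (hF : F.Finite) (S : ι → Set α) :
    c (⋃ i ∈ F, S i) = ⋃ i ∈ F, c (S i) := by
  have := map_finset_sup (⟨⟨c, hc⟩, hc₀⟩ : SupBotHom (Set α) (Set β)) hF.toFinset S
  simpa [Finset.sup_set_eq_biUnion] using this

end

theorem cech_pasting_lemma_general {X Y ι : Type*}
    (c : Set X → Set X)
    (h1 : c ∅ = ∅)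
    (h3 : ∀ A B : Set X, c (A ∪ B) = c A ∪ c B)
    (d : Set Y → Set Y)
    (hd3 : ∀ A B : Set Y, d (A ∪ B) = d A ∪ d B)
    (U : ι → Set X)
    (hcover : ⋃ i, U i = Set.univ)
    (hclosed : ∀ i, c (U i) = U i)
    (hlf : ∀ x : X, ∃ B : Set X, x ∉ c Bᶜ ∧ {i : ι | (U i ∩ B).Nonempty}.Finite)
    (f : X → Y)
    (hres : ∀ i, ∀ S : Set X, S ⊆ U i → f '' (U i ∩ c S) ⊆ d (f '' S)) :
    ∀ A : Set X, f '' c A ⊆ d (f '' A) := by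
  have c_mono : Monotone c := .of_map_sup h3
  have d_mono : Monotone d := .of_map_sup hd3
  rintro A _ ⟨x, hx, rfl⟩
  obtain ⟨B, hxB, hfin⟩ := hlf x
  have hAB : A ∩ B ⊆ ⋃ i ∈ {i | (U i ∩ B).Nonempty}, U i ∩ A := fun a ha => by
    obtain ⟨i, hi⟩ := mem_iUnion.mp (hcover ▸ mem_univ a)
    exact mem_biUnion ⟨a, hi, ha.2⟩ ⟨hi, ha.1⟩
  have hx_union := c_mono hAB (mem_map_inter_of_notMem_map_compl h3 hx hxB)
  rw [hfin.map_biUnion_of_map_union h1 h3] at hx_union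
  obtain ⟨i, -, hxi⟩ := mem_iUnion₂.mp hx_union
  have hxU : x ∈ U i := hclosed i ▸ c_mono inter_subset_left hxi
  exact d_mono (image_mono inter_subset_right) (hres i _ inter_subset_left ⟨x, ⟨hxU, hxi⟩, rfl⟩)

theorem cech_pasting_lemma {X Y ι : Type*}
    (c : Set X → Set X)
    (h1 : c ∅ = ∅) (h2 : ∀ A : Set X, A ⊆ c A)
    (h3 : ∀ A B : Set X, c (A ∪ B) = c A ∪ c B)
    (d : Set Y → Set Y)
    (hd1 : d ∅ = ∅) (hd2 : ∀ B : Set Y, B ⊆ d B)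
    (hd3 : ∀ A B : Set Y, d (A ∪ B) = d A ∪ d B)
    (U : ι → Set X)
    (hcover : ⋃ i, U i = Set.univ)
    (hclosed : ∀ i, c (U i) = U i)
    (hlf : ∀ x : X, ∃ B : Set X, x ∉ c Bᶜ ∧ {i : ι | (U i ∩ B).Nonempty}.Finite)
    (f : X → Y)
    (hres : ∀ i, ∀ S : Set X, S ⊆ U i → f '' (U i ∩ c S) ⊆ d (f '' S)) :
    ∀ A : Set X, f '' c A ⊆ d (f '' A) :=
  cech_pasting_lemma_general c h1 h3 d hd3 U hcover hclosed hlf f hres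
end

section
/- For n, m ≥ 1 the discrete interval (J_n, c_m) is contractible, where J_n = {0, 1, …, n} carries the subspace closure induced from (ℤ, c_m) with c_m(i) = {j ∈ ℤ : |i − j| ≤ m}. -/
open Set

/-- `U` is a neighborhood of `x` in the closure space `(X, c)`. -/
def Nbhd {X : Type*} (c : Set X → Set X) (x : X) (U : Set X) : Prop := x ∉ c Uᶜ

/-- The product closure of two closure operators. -/
def ProdCl {X Y : Type*} (c : Set X → Set X) (d : Set Y → Set Y) :
    Set (X × Y) → Set (X × Y) :=
  fun M => {p | ∀ U V, Nbhd c p.1 U → Nbhd d p.2 V → ((U ×ˢ V) ∩ M).Nonempty}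

/-- The topological closure operator on the unit interval `[0,1]`. -/
def IntCl : Set unitInterval → Set unitInterval := fun A => closure A

/-- Continuity of a map of closure spaces. -/
def ContMap {X Y : Type*} (c : Set X → Set X) (d : Set Y → Set Y) (f : X → Y) : Prop :=
  ∀ A : Set X, f '' c A ⊆ d (f '' A)

/-- Homotopy of maps of closure spaces. -/
def HomotopicMaps {X Y : Type*} (c : Set X → Set X) (d : Set Y → Set Y)
    (f g : X → Y) : Prop :=
  ∃ H : X × unitInterval → Y, ContMap (ProdCl c IntCl) d H ∧
    (∀ x, H (x, 0) = f x) ∧ (∀ x, H (x, 1) = g x)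

/-- A closure space is contractible if its identity map is homotopic to a constant map. -/
def ContractibleCl {X : Type*} (c : Set X → Set X) : Prop :=
  ∃ x₀ : X, HomotopicMaps c c id (fun _ => x₀)

/-- The `m`-nearest-neighbors closure operator on `ℤ`. -/
def ZCl (m : ℕ) : Set ℤ → Set ℤ := fun A => {j | ∃ i ∈ A, |i - j| ≤ (m : ℤ)}

/-! Contract `J_n` onto `0` by the homotopy `H(x, t) = min x ⌈n (1 - t)⌉`. The level
`⌈n (1 - t)⌉` changes by at most `1` near each `t`, and `min` does not increase distances, so a
point `(y, s)` near `(x, t)` is sent to within `m ≥ 1` of `H(x, t)`. -/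

open Topology

lemma nbhd_closure_iff {X : Type*} [TopologicalSpace X] {x : X} {U : Set X} :
    Nbhd closure x U ↔ U ∈ 𝓝 x := by
  rw [Nbhd, ← mem_compl_iff, ← interior_compl, compl_compl, mem_interior_iff_mem_nhds]

lemma contMap_prodCl_of_forall_nbhd {X Y Z : Type*} {c : Set X → Set X} {d : Set Y → Set Y}
    {e : Set Z → Set Z} (he : Monotone e) {H : X × Y → Z}
    (hH : ∀ p : X × Y, ∃ U V, Nbhd c p.1 U ∧ Nbhd d p.2 V ∧ ∀ q ∈ U ×ˢ V, H p ∈ e {H q}) :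
    ContMap (ProdCl c d) e H := by
  rintro A _ ⟨p, hp, rfl⟩
  obtain ⟨U, V, hU, hV, hUV⟩ := hH p
  obtain ⟨q, hq, hqA⟩ := hp U V hU hV
  exact he (singleton_subset_iff.2 (mem_image_of_mem H hqA)) (hUV q hq)

def IntSubCl (m : ℕ) (p : ℤ → Prop) : Set (Subtype p) → Set (Subtype p) :=
  fun B => Subtype.val ⁻¹' ZCl m (Subtype.val '' B)

section IntSubCl

variable {m : ℕ} {p : ℤ → Prop}

lemma intSubCl_mono : Monotone (IntSubCl m p) := by
  rintro A B hAB x ⟨_, ⟨y, hy, rfl⟩, hxy⟩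
  exact ⟨y, ⟨y, hAB hy, rfl⟩, hxy⟩

lemma mem_intSubCl_singleton {x y : Subtype p} :
    x ∈ IntSubCl m p {y} ↔ |y.val - x.val| ≤ m := by
  simp [IntSubCl, ZCl]

lemma nbhd_intSubCl (x : Subtype p) : Nbhd (IntSubCl m p) x {y | |y.val - x.val| ≤ m} := by
  rintro ⟨_, ⟨y, hy, rfl⟩, hyx⟩
  exact hy hyx

end IntSubCl

lemma abs_ceil_sub_ceil_le_one {R : Type*} [CommRing R] [LinearOrder R] [IsStrictOrderedRing R]
    [FloorRing R] {a b : R} (h : |a - b| ≤ 1) : |⌈a⌉ - ⌈b⌉| ≤ 1 := by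
  obtain ⟨hlow, hupp⟩ := abs_le.1 h
  have hab : ⌈a⌉ ≤ ⌈b⌉ + 1 := Int.ceil_add_one b ▸ Int.ceil_le_ceil (by linarith)
  have hba : ⌈b⌉ ≤ ⌈a⌉ + 1 := Int.ceil_add_one a ▸ Int.ceil_le_ceil (by linarith)
  exact abs_le.2 ⟨by linarith, by linarith⟩

lemma ContinuousAt.eventually_abs_ceil_sub_le_one {X : Type*} [TopologicalSpace X] {g : X → ℝ}
    {x : X} (hg : ContinuousAt g x) : ∀ᶠ y in 𝓝 x, |⌈g y⌉ - ⌈g x⌉| ≤ 1 :=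
  (Metric.tendsto_nhds.1 hg 1 one_pos).mono fun _ hy =>
    abs_ceil_sub_ceil_le_one (Real.dist_eq _ _ ▸ hy.le)

section Truncation

variable {n m : ℕ} {φ : unitInterval → ℤ}

def truncate (hφ : ∀ t, 0 ≤ φ t) (q : {i : ℤ // 0 ≤ i ∧ i ≤ (n : ℤ)} × unitInterval) :
    {i : ℤ // 0 ≤ i ∧ i ≤ (n : ℤ)} :=
  ⟨min q.1.val (φ q.2), le_min q.1.2.1 (hφ q.2), (min_le_left _ _).trans q.1.2.2⟩

lemma contMap_truncate (hm : 1 ≤ m) (hφ : ∀ t, 0 ≤ φ t)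
    (hφ_loc : ∀ t, ∀ᶠ s in 𝓝 t, |φ s - φ t| ≤ 1) :
    ContMap (ProdCl (IntSubCl m _) IntCl) (IntSubCl m _) (truncate (n := n) hφ) := by
  refine contMap_prodCl_of_forall_nbhd intSubCl_mono fun ⟨x, t⟩ => ?_
  refine ⟨_, _, nbhd_intSubCl x, nbhd_closure_iff.2 (hφ_loc t), ?_⟩
  rintro ⟨y, s⟩ ⟨hyx, hst⟩
  rw [mem_intSubCl_singleton]
  calc |min y.val (φ s) - min x.val (φ t)|
      ≤ max |y.val - x.val| |φ s - φ t| := abs_min_sub_min_le_max _ _ _ _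
    _ ≤ m := max_le hyx (hst.trans (by exact_mod_cast hm))

theorem contractibleCl_of_truncation (hm : 1 ≤ m) (hφ : ∀ t, 0 ≤ φ t)
    (hφ_loc : ∀ t, ∀ᶠ s in 𝓝 t, |φ s - φ t| ≤ 1) (hφ₀ : (n : ℤ) ≤ φ 0) (hφ₁ : φ 1 = 0) :
    ContractibleCl (IntSubCl m fun i => 0 ≤ i ∧ i ≤ (n : ℤ)) := by
  refine ⟨⟨0, le_rfl, n.cast_nonneg⟩, truncate hφ, contMap_truncate hm hφ hφ_loc, ?_, ?_⟩
  · exact fun x => Subtype.ext (min_eq_left (x.2.2.trans hφ₀))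
  · exact fun x => Subtype.ext ((min_eq_right (hφ₁.trans_le x.2.1)).trans hφ₁)

end Truncation

theorem discrete_interval_contractible_general (n m : ℕ) (hm : 1 ≤ m) :
    ContractibleCl (fun B : Set {i : ℤ // 0 ≤ i ∧ i ≤ (n : ℤ)} =>
      Subtype.val ⁻¹' (ZCl m (Subtype.val '' B))) := by
  have hg : Continuous fun t : unitInterval => (n : ℝ) * (1 - t) := by fun_prop
  refine contractibleCl_of_truncation (φ := fun t => ⌈(n : ℝ) * (1 - t)⌉) hm
    (fun t => Int.ceil_nonneg (mul_nonneg n.cast_nonneg (sub_nonneg.2 t.2.2)))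
    (fun t => hg.continuousAt.eventually_abs_ceil_sub_le_one) ?_ ?_ <;> simp

theorem discrete_interval_contractible (n m : ℕ) (hn : 1 ≤ n) (hm : 1 ≤ m) :
    ContractibleCl (fun B : Set {i : ℤ // 0 ≤ i ∧ i ≤ (n : ℤ)} =>
      Subtype.val ⁻¹' (ZCl m (Subtype.val '' B))) :=
  discrete_interval_contractible_general n m hm
end
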